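/- arXiv:1804.00414 — 10 statements merged into one kernel-verified Lean document; each statement's English description precedes it below -/
import Mathlib

section
/- Let ψ, φ : ℂ → ℂ be entire functions, let (fₙ) be a sequence of entire functions belonging to F² such that ψ·(fₙ∘φ) ∈ F² for every n, and let f, g ∈ F² be entire functions such that ∫_ℂ |fₙ(z) − f(z)|² e^{−|z|²} dV(z) → 0 and ∫_ℂ |ψ(z) fₙ(φ(z)) − g(z)|² e^{−|z|²} dV(z) → 0 as n → ∞. Then ψ(z) f(φ(z)) = g(z) for every z ∈ ℂ; in particular ψ·(f∘φ) ∈ F². (Hence every maximal weighted composition operator is closed on F².) -/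
/-! Convergence in `F²` forces pointwise convergence: by the mean value property applied to `G²`,
`|G(w)|²` is at most the average of `|G|²` over the unit disc around `w`, where the Gaussian weight
is at least `exp(-(|w| + 1)²)`. Applied to `G = fₙ - f` and `G = ψ·(fₙ∘φ) - g` this gives
`fₙ → f` and `ψ·(fₙ∘φ) → g` pointwise, so `ψ·(f∘φ) = g` by uniqueness of limits. -/

open MeasureTheory Complex Filter Set Metric Real Topology

theorem ofReal_two_pi_mul_enorm_le_lintegral_circleMap {G : ℂ → ℂ} (hG : Differentiable ℂ G)
    (c : ℂ) (r : ℝ) :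
    ENNReal.ofReal (2 * π) * ‖G c‖ₑ ≤ ∫⁻ θ in Ioo (-π) π, ‖G (circleMap c r θ)‖ₑ := by
  have hmean : (2 * π) • G c = ∫ θ in (-π)..π, G (circleMap c r θ) := by
    rw [← hG.diffContOnCl.circleAverage (R := r), circleAverage_eq_integral_add (-π),
      smul_inv_smul₀ (by positivity),
      intervalIntegral.integral_comp_add_right (fun θ => G (circleMap c r θ))]
    ring_nf
  calc ENNReal.ofReal (2 * π) * ‖G c‖ₑ = ‖∫ θ in (-π)..π, G (circleMap c r θ)‖ₑ := by
        rw [← hmean, enorm_smul, Real.enorm_of_nonneg (by positivity)]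
    _ ≤ ∫⁻ θ in Ioc (-π) π, ‖G (circleMap c r θ)‖ₑ := by
        rw [intervalIntegral.integral_of_le (by linarith [pi_pos])]
        exact enorm_integral_le_lintegral_enorm _
    _ = ∫⁻ θ in Ioo (-π) π, ‖G (circleMap c r θ)‖ₑ := by
        rw [Measure.restrict_congr_set Ioo_ae_eq_Ioc]

theorem add_polarCoord_symm_eq_circleMap (c : ℂ) (p : ℝ × ℝ) :
    c + Complex.polarCoord.symm p = circleMap c p.1 p.2 := by
  rw [Complex.polarCoord_symm_apply, circleMap, Complex.exp_mul_I, ofReal_cos, ofReal_sin]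

theorem setLIntegral_ball_eq_lintegral_circleMap {f : ℂ → ENNReal} (hf : Measurable f) (c : ℂ)
    (R : ℝ) :
    ∫⁻ z in ball c R, f z =
      ∫⁻ r in Ioo 0 R, ∫⁻ θ in Ioo (-π) π, ENNReal.ofReal r * f (circleMap c r θ) := by
  set g : ℝ × ℝ → ENNReal := fun p => ENNReal.ofReal p.1 * f (circleMap c p.1 p.2)
  have hg : Measurable g := by fun_prop
  calc ∫⁻ z in ball c R, f z = ∫⁻ z, (ball c R).indicator f (c + z) := by
        rw [lintegral_add_left_eq_self, lintegral_indicator measurableSet_ball]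
    _ = ∫⁻ p in polarCoord.target,
          ENNReal.ofReal p.1 • (ball c R).indicator f (c + Complex.polarCoord.symm p) :=
        (Complex.lintegral_comp_polarCoord_symm _).symm
    _ = ∫⁻ p in polarCoord.target, (Iio R ×ˢ univ).indicator g p := by
        refine setLIntegral_congr_fun polarCoord.open_target.measurableSet fun p hp => ?_
        have hr : 0 < p.1 := hp.1
        simp [g, indicator, ← add_polarCoord_symm_eq_circleMap, abs_of_pos hr]
    _ = ∫⁻ p in Ioo 0 R ×ˢ Ioo (-π) π, g p := by
        rw [lintegral_indicator (measurableSet_Iio.prod MeasurableSet.univ),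
          Measure.restrict_restrict (measurableSet_Iio.prod MeasurableSet.univ)]
        congr 2
        ext ⟨r, θ⟩
        simp only [polarCoord_target, mem_inter_iff, mem_prod, mem_Ioi, mem_Ioo, mem_Iio,
          mem_univ]
        tauto
    _ = _ := by
        rw [Measure.volume_eq_prod, ← Measure.prod_restrict, lintegral_prod _ hg.aemeasurable]

theorem lintegral_Ioo_zero_ofReal (R : ℝ) (hR : 0 ≤ R) :
    ∫⁻ r in Ioo 0 R, ENNReal.ofReal r = ENNReal.ofReal (R ^ 2 / 2) := by
  have hint : IntegrableOn (fun r : ℝ => r) (Ioo 0 R) :=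
    continuous_id.integrableOn_Icc.mono_set Ioo_subset_Icc_self
  rw [← ofReal_integral_eq_lintegral_ofReal hint
      ((ae_restrict_iff' measurableSet_Ioo).2 (ae_of_all _ fun r hr => hr.1.le)),
    ← integral_Ioc_eq_integral_Ioo, ← intervalIntegral.integral_of_le hR, integral_id]
  ring_nf

theorem enorm_mul_volume_ball_le_setLIntegral {G : ℂ → ℂ} (hG : Differentiable ℂ G) (c : ℂ)
    (R : ℝ) : ‖G c‖ₑ * volume (ball c R) ≤ ∫⁻ z in ball c R, ‖G z‖ₑ := by
  have hGm : Measurable G := hG.continuous.measurable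
  rcases le_or_gt R 0 with hR | hR
  · simp [ball_eq_empty.2 hR]
  have hvol : volume (ball c R) = ENNReal.ofReal (R ^ 2 / 2) * ENNReal.ofReal (2 * π) := by
    rw [Complex.volume_ball, ← ENNReal.ofReal_mul (by positivity), ← ENNReal.ofReal_pow hR.le,
      ← ENNReal.ofReal_coe_nnreal, NNReal.coe_real_pi, ← ENNReal.ofReal_mul (by positivity)]
    ring_nf
  rw [setLIntegral_ball_eq_lintegral_circleMap hG.continuous.enorm.measurable, hvol,
    ← lintegral_Ioo_zero_ofReal R hR.le, ← lintegral_mul_const _ ENNReal.measurable_ofReal,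
    ← lintegral_const_mul _ (by fun_prop)]
  refine setLIntegral_mono' measurableSet_Ioo fun r _ => ?_
  rw [lintegral_const_mul _ (by fun_prop), mul_left_comm, mul_comm ‖G c‖ₑ]
  gcongr
  exact ofReal_two_pi_mul_enorm_le_lintegral_circleMap hG c r

noncomputable def fockNormSq (f : ℂ → ℂ) : ENNReal :=
  ∫⁻ z, ENNReal.ofReal (‖f z‖ ^ 2 * Real.exp (-‖z‖ ^ 2))

theorem enorm_sq_mul_le_fockNormSq {G : ℂ → ℂ} (hG : Differentiable ℂ G) (w : ℂ) :
    ‖G w‖ₑ ^ 2 * (ENNReal.ofReal (Real.exp (-(‖w‖ + 1) ^ 2)) * volume (ball w 1)) ≤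
      fockNormSq G := by
  have hweight : ∀ z ∈ ball w 1, ENNReal.ofReal (Real.exp (-(‖w‖ + 1) ^ 2)) * ‖G z ^ 2‖ₑ ≤
      ENNReal.ofReal (‖G z‖ ^ 2 * Real.exp (-‖z‖ ^ 2)) := fun z hz => by
    have hz : ‖z‖ ≤ ‖w‖ + 1 := by
      have := norm_le_norm_add_norm_sub' z w
      linarith [mem_ball_iff_norm.1 hz]
    rw [ENNReal.ofReal_mul (by positivity), ← norm_pow, ofReal_norm, mul_comm]
    gcongr
  calc ‖G w‖ₑ ^ 2 * (ENNReal.ofReal (Real.exp (-(‖w‖ + 1) ^ 2)) * volume (ball w 1))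
      = ENNReal.ofReal (Real.exp (-(‖w‖ + 1) ^ 2)) * (‖G w ^ 2‖ₑ * volume (ball w 1)) := by
        rw [enorm_pow]; ring
    _ ≤ ENNReal.ofReal (Real.exp (-(‖w‖ + 1) ^ 2)) * ∫⁻ z in ball w 1, ‖G z ^ 2‖ₑ := by
        gcongr
        exact enorm_mul_volume_ball_le_setLIntegral (hG.pow 2) w 1
    _ = ∫⁻ z in ball w 1, ENNReal.ofReal (Real.exp (-(‖w‖ + 1) ^ 2)) * ‖G z ^ 2‖ₑ :=
        (lintegral_const_mul _ (hG.pow 2).continuous.enorm.measurable).symm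
    _ ≤ ∫⁻ z in ball w 1, ENNReal.ofReal (‖G z‖ ^ 2 * Real.exp (-‖z‖ ^ 2)) :=
        setLIntegral_mono' measurableSet_ball hweight
    _ ≤ fockNormSq G := setLIntegral_le_lintegral _ _

theorem tendsto_apply_of_tendsto_fockNormSq_sub {ι : Type*} {l : Filter ι} {H : ι → ℂ → ℂ}
    {h : ℂ → ℂ} (hH : ∀ n, Differentiable ℂ (H n)) (hh : Differentiable ℂ h)
    (hlim : Tendsto (fun n => fockNormSq (H n - h)) l (𝓝 0)) (w : ℂ) :
    Tendsto (fun n => H n w) l (𝓝 (h w)) := by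
  set K := ENNReal.ofReal (Real.exp (-(‖w‖ + 1) ^ 2)) * volume (ball w 1)
  have hK : K ≠ 0 :=
    mul_ne_zero (by simp [Real.exp_pos]) (measure_ball_pos volume w one_pos).ne'
  have hK' : K ≠ ⊤ := ENNReal.mul_ne_top ENNReal.ofReal_ne_top measure_ball_lt_top.ne
  have hsq : Tendsto (fun n => ‖H n w - h w‖ₑ ^ 2) l (𝓝 0) := by
    have hdiv : Tendsto (fun n => fockNormSq (H n - h) / K) l (𝓝 0) := by
      simpa using ENNReal.Tendsto.div_const hlim (Or.inr hK)
    refine tendsto_of_tendsto_of_tendsto_of_le_of_le tendsto_const_nhds hdiv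
      (fun _ => zero_le) fun n => ?_
    exact ENNReal.le_div_iff_mul_le (Or.inl hK) (Or.inl hK') |>.2
      (enorm_sq_mul_le_fockNormSq ((hH n).sub hh) w)
  have hnorm : Tendsto (fun n => ‖H n w - h w‖ₑ) l (𝓝 0) := by
    have := ((ENNReal.continuous_rpow_const (y := ((2 : ℕ) : ℝ)⁻¹)).tendsto 0).comp hsq
    simpa only [Function.comp_def, ENNReal.pow_rpow_inv_natCast two_ne_zero,
      ENNReal.zero_rpow_of_pos (by positivity : (0 : ℝ) < ((2 : ℕ) : ℝ)⁻¹)] using this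
  rw [← tendsto_sub_nhds_zero_iff]
  exact tendsto_zero_iff_enorm_tendsto_zero.2 hnorm

theorem maximal_wco_closed_general (ψ φ : ℂ → ℂ) (hψ : Differentiable ℂ ψ) (hφ : Differentiable ℂ φ)
    (F : ℕ → ℂ → ℂ) (hFdiff : ∀ n, Differentiable ℂ (F n))
    (f g : ℂ → ℂ) (hf : Differentiable ℂ f) (hg : Differentiable ℂ g)
    (hgmem : ∫⁻ z : ℂ, ENNReal.ofReal
        ((‖g z‖) ^ 2 * Real.exp (-(‖z‖) ^ 2)) < ⊤)
    (hconv1 : Tendsto (fun n => ∫⁻ z : ℂ, ENNReal.ofReal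
        ((‖F n z - f z‖) ^ 2 * Real.exp (-(‖z‖) ^ 2))) atTop (nhds 0))
    (hconv2 : Tendsto (fun n => ∫⁻ z : ℂ, ENNReal.ofReal
        ((‖ψ z * F n (φ z) - g z‖) ^ 2 * Real.exp (-(‖z‖) ^ 2)))
        atTop (nhds 0)) :
    (∀ z : ℂ, ψ z * f (φ z) = g z) ∧
      ∫⁻ z : ℂ, ENNReal.ofReal
        ((‖ψ z * f (φ z)‖) ^ 2 * Real.exp (-(‖z‖) ^ 2)) < ⊤ := by
  have hF : ∀ z, Tendsto (fun n => F n z) atTop (𝓝 (f z)) :=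
    tendsto_apply_of_tendsto_fockNormSq_sub hFdiff hf hconv1
  have hW : ∀ z, Tendsto (fun n => ψ z * F n (φ z)) atTop (𝓝 (g z)) :=
    tendsto_apply_of_tendsto_fockNormSq_sub (H := fun n z => ψ z * F n (φ z))
      (fun n => hψ.mul ((hFdiff n).comp hφ)) hg hconv2
  have heq : ∀ z, ψ z * f (φ z) = g z := fun z =>
    tendsto_nhds_unique ((hF (φ z)).const_mul (ψ z)) (hW z)
  exact ⟨heq, by simpa only [heq] using hgmem⟩

/-- the maximal weighted composition operator is closed on the Fock space:
if `fₙ → f` and `ψ·(fₙ∘φ) → g` in `F²`, then `ψ·(f∘φ) = g` pointwise, and in particular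
`ψ·(f∘φ) ∈ F²`. -/
theorem maximal_wco_closed (ψ φ : ℂ → ℂ) (hψ : Differentiable ℂ ψ) (hφ : Differentiable ℂ φ)
    (F : ℕ → ℂ → ℂ) (hFdiff : ∀ n, Differentiable ℂ (F n))
    (hFmem : ∀ n, ∫⁻ z : ℂ, ENNReal.ofReal
        ((‖F n z‖) ^ 2 * Real.exp (-(‖z‖) ^ 2)) < ⊤)
    (hWFmem : ∀ n, ∫⁻ z : ℂ, ENNReal.ofReal
        ((‖ψ z * F n (φ z)‖) ^ 2 * Real.exp (-(‖z‖) ^ 2)) < ⊤)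
    (f g : ℂ → ℂ) (hf : Differentiable ℂ f) (hg : Differentiable ℂ g)
    (hfmem : ∫⁻ z : ℂ, ENNReal.ofReal
        ((‖f z‖) ^ 2 * Real.exp (-(‖z‖) ^ 2)) < ⊤)
    (hgmem : ∫⁻ z : ℂ, ENNReal.ofReal
        ((‖g z‖) ^ 2 * Real.exp (-(‖z‖) ^ 2)) < ⊤)
    (hconv1 : Tendsto (fun n => ∫⁻ z : ℂ, ENNReal.ofReal
        ((‖F n z - f z‖) ^ 2 * Real.exp (-(‖z‖) ^ 2))) atTop (nhds 0))
    (hconv2 : Tendsto (fun n => ∫⁻ z : ℂ, ENNReal.ofReal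
        ((‖ψ z * F n (φ z) - g z‖) ^ 2 * Real.exp (-(‖z‖) ^ 2)))
        atTop (nhds 0)) :
    (∀ z : ℂ, ψ z * f (φ z) = g z) ∧
      ∫⁻ z : ℂ, ENNReal.ofReal
        ((‖ψ z * f (φ z)‖) ^ 2 * Real.exp (-(‖z‖) ^ 2)) < ⊤ :=
  maximal_wco_closed_general ψ φ hψ hφ F hFdiff f g hf hg hgmem hconv1 hconv2
end

section
/- Let ψ₀, B, C, D ∈ ℂ with ψ₀ ≠ 0, and set ψ(z) = ψ₀·e^{Cz² + Dz} and φ(z) = z + B. If |ψ(u)/ψ(z)| · e^{Re(conj(z)·φ(u)) − |u|²/2 − |φ(z)|²/2} ≤ 1 for all u, z ∈ ℂ, then C = 0 and |D| ≤ |B|. -/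
open Complex ComplexConjugate

/-!
Write `u = z + w`. In the exponent of the hypothesis every dependence on `z` cancels except through
`ψ(z + w)/ψ(z) = exp(2Cwz + Cw² + Dw)`, and what is left is `-(|w|² + |B|²)/2`. So for every `w`
the real part of the affine function `z ↦ 2Cwz + Cw² + Dw` is bounded above, which forces
`C = 0`; then `w = conj D` gives `|D|² ≤ (|D|² + |B|²)/2`.
-/

namespace Complex

theorem re_conj_mul_add_add_sub_norm_sq (z w B : ℂ) :
    (conj z * (z + w + B)).re - ‖z + w‖ ^ 2 / 2 - ‖z + B‖ ^ 2 / 2 = -(‖w‖ ^ 2 + ‖B‖ ^ 2) / 2 := by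
  simp only [Complex.sq_norm, normSq_apply, mul_re, add_re, add_im, conj_re, conj_im]
  ring

theorem eq_zero_of_forall_re_mul_add_le {a b : ℂ} {M : ℝ} (h : ∀ z, (a * z + b).re ≤ M) :
    a = 0 := by
  by_contra ha
  have := h (((M - b.re + 1 : ℝ) : ℂ) * a⁻¹)
  rw [mul_left_comm, mul_inv_cancel₀ ha, mul_one, add_re, ofReal_re] at this
  linarith

theorem norm_le_of_forall_re_mul_le {a : ℂ} {r : ℝ} (hr : 0 ≤ r)
    (h : ∀ w, (a * w).re ≤ (‖w‖ ^ 2 + r ^ 2) / 2) : ‖a‖ ≤ r := by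
  have := h (conj a)
  rw [mul_conj, normSq_eq_norm_sq, ofReal_re, norm_conj] at this
  exact (pow_le_pow_iff_left₀ (norm_nonneg a) hr two_ne_zero).mp (by linarith)

end Complex

/-- the key analytic step for cohyponormality with `φ(z) = z + B`:
if `|ψ(u)/ψ(z)| e^{Re(z̄ φ(u)) - |u|²/2 - |φ(z)|²/2} ≤ 1` for all `u, z`, where
`ψ(z) = ψ₀ e^{Cz² + Dz}`, then `C = 0` and `|D| ≤ |B|`. -/
theorem cohypo_key_step (ψ₀ B C D : ℂ) (hψ₀ : ψ₀ ≠ 0)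
    (ψ : ℂ → ℂ) (hψ : ∀ z : ℂ, ψ z = ψ₀ * Complex.exp (C * z ^ 2 + D * z))
    (φ : ℂ → ℂ) (hφ : ∀ z : ℂ, φ z = z + B)
    (hineq : ∀ u z : ℂ, ‖ψ u / ψ z‖ *
        Real.exp ((conj z * φ u).re - (‖u‖) ^ 2 / 2
          - (‖φ z‖) ^ 2 / 2) ≤ 1) :
    C = 0 ∧ ‖D‖ ≤ ‖B‖ := by
  have key : ∀ z w, (2 * C * w * z + (C * w ^ 2 + D * w)).re ≤ (‖w‖ ^ 2 + ‖B‖ ^ 2) / 2 := by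
    intro z w
    have h := hineq (z + w) z
    rw [hψ, hψ, hφ, hφ, mul_div_mul_left _ _ hψ₀, ← exp_sub, norm_exp, ← Real.exp_add,
      Real.exp_le_one_iff, re_conj_mul_add_add_sub_norm_sq,
      show C * (z + w) ^ 2 + D * (z + w) - (C * z ^ 2 + D * z)
        = 2 * C * w * z + (C * w ^ 2 + D * w) by ring] at h
    linarith
  have hC : C = 0 := by
    simpa using eq_zero_of_forall_re_mul_add_le fun z => key z 1
  exact ⟨hC, norm_le_of_forall_re_mul_le (norm_nonneg B) fun w => by simpa [hC] using key 0 w⟩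
end

section
/- Let B, C, D ∈ ℂ. If |z − u|² − 2·Re[(u − z)·(C·(z + u) + D)] + |B|² ≥ 0 for all u, z ∈ ℂ, then C = 0 and |D| ≤ |B|. -/
open Complex ComplexConjugate

/-
Substituting `u = (s - w) / 2`, `z = (s + w) / 2` turns the hypothesis into
`‖w‖² + 2 Re (w (C s + D)) + ‖B‖² ≥ 0` for all `w, s`. Completing the square in `w`
(minimum at `w = -conj (C s + D)`) gives `‖C s + D‖ ≤ ‖B‖` for every `s`, and a bounded
affine function of `s` must be constant.
-/

lemma norm_add_conj_sq (w v : ℂ) :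
    ‖w + conj v‖ ^ 2 = ‖w‖ ^ 2 + 2 * (w * v).re + ‖v‖ ^ 2 := by
  simp only [Complex.sq_norm, normSq_add, normSq_conj, conj_conj]
  ring

lemma sq_norm_le_of_forall_nonneg {v : ℂ} {b : ℝ}
    (h : ∀ w : ℂ, 0 ≤ ‖w‖ ^ 2 + 2 * (w * v).re + b) : ‖v‖ ^ 2 ≤ b := by
  have hsq := norm_add_conj_sq (-conj v) v
  rw [neg_add_cancel, norm_zero] at hsq
  linarith [h (-conj v)]

lemma eq_zero_of_forall_norm_mul_add_le {C D : ℂ} {r : ℝ}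
    (h : ∀ s : ℂ, ‖C * s + D‖ ≤ r) : C = 0 := by
  by_contra hC
  have hr := h ((|r| + 1 - D) / C)
  rw [mul_div_cancel₀ _ hC, sub_add_cancel] at hr
  norm_cast at hr
  rw [Real.norm_of_nonneg (by positivity)] at hr
  linarith [le_abs_self r]

lemma norm_mul_add_le_of_forall_nonneg {B C D : ℂ}
    (h : ∀ u z : ℂ, ‖z - u‖ ^ 2 - 2 * ((u - z) * (C * (z + u) + D)).re + ‖B‖ ^ 2 ≥ 0)
    (s : ℂ) : ‖C * s + D‖ ≤ ‖B‖ := by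
  refine (pow_le_pow_iff_left₀ (norm_nonneg _) (norm_nonneg _) two_ne_zero).mp
    (sq_norm_le_of_forall_nonneg fun w => ?_)
  have hw := h ((s - w) / 2) ((s + w) / 2)
  rwa [show (s + w) / 2 - (s - w) / 2 = w by ring, show (s - w) / 2 - (s + w) / 2 = -w by ring,
    show (s + w) / 2 + (s - w) / 2 = s by ring, neg_mul, neg_re, mul_neg, sub_neg_eq_add,
    ge_iff_le] at hw

/-- if `|z - u|² - 2 Re[(u - z)(C(z + u) + D)] + |B|² ≥ 0` for all `u, z ∈ ℂ`,
then `C = 0` and `|D| ≤ |B|`. -/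
theorem quadratic_positivity (B C D : ℂ)
    (h : ∀ u z : ℂ, (‖z - u‖) ^ 2
        - 2 * ((u - z) * (C * (z + u) + D)).re + (‖B‖) ^ 2 ≥ 0) :
    C = 0 ∧ ‖D‖ ≤ ‖B‖ := by
  have bound := norm_mul_add_le_of_forall_nonneg h
  exact ⟨eq_zero_of_forall_norm_mul_add_le bound, by simpa using bound 0⟩
end

section
/- Let A, B, C, D ∈ ℂ with C ≠ 0 and |A| > 1, and set ψ̂(z) = conj(C)·e^{conj(B)·z}, φ̂(z) = conj(A)·z + conj(D). Then there exists a constant L > 0 such that for every entire function f ∈ F² with ψ̂·(f∘φ̂) ∈ F², one has ∫_ℂ |f(z)|²·e^{−|z|²} dV(z) ≤ L²·∫_ℂ |ψ̂(z)·f(φ̂(z))|²·e^{−|z|²} dV(z). -/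
/-!
After the substitution `z = conj A * u + conj D`, which multiplies Lebesgue measure by `|A|²`,
it suffices to dominate the Gaussian weight `exp (-|conj A * u + conj D|²)` by a constant multiple
of `|exp (conj B * u)|² exp (-|u|²)`. The exponent of the quotient is at most a real quadratic
polynomial in `|u|` with leading coefficient `1 - |A|² < 0`, hence bounded above.
-/

open MeasureTheory Complex ComplexConjugate

theorem sq_norm_sub_two_mul_le_sq_norm_add {E : Type*} [SeminormedAddCommGroup E] (x y : E) :
    ‖x‖ ^ 2 - 2 * ‖x‖ * ‖y‖ ≤ ‖x + y‖ ^ 2 := by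
  have h : ‖x‖ - ‖y‖ ≤ ‖x + y‖ := by simpa using norm_sub_norm_le x (-y)
  rcases le_total ‖y‖ ‖x‖ with hyx | hxy
  · nlinarith [mul_self_le_mul_self (sub_nonneg.2 hyx) h, norm_nonneg y]
  · nlinarith [norm_nonneg x, norm_nonneg y, sq_nonneg ‖x + y‖]

theorem neg_mul_sq_add_mul_le {ε : ℝ} (hε : 0 < ε) (c t : ℝ) :
    -ε * t ^ 2 + c * t ≤ c ^ 2 / (4 * ε) := by
  rw [le_div_iff₀ (by positivity)]
  nlinarith [sq_nonneg (2 * ε * t - c)]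

theorem exists_exp_neg_sq_norm_mul_add_le (a b β : ℂ) (ha : 1 < ‖a‖) :
    ∃ K : ℝ, 0 < K ∧ ∀ u : ℂ,
      Real.exp (-‖a * u + b‖ ^ 2) ≤ K * (‖exp (β * u)‖ ^ 2 * Real.exp (-‖u‖ ^ 2)) := by
  set ε := ‖a‖ ^ 2 - 1
  set c := 2 * ‖a‖ * ‖b‖ + 2 * ‖β‖
  have hε : 0 < ε := by nlinarith
  refine ⟨Real.exp (c ^ 2 / (4 * ε)), Real.exp_pos _, fun u => ?_⟩
  have hre : -(‖β‖ * ‖u‖) ≤ (β * u).re := by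
    simpa [norm_mul] using neg_le_of_abs_le (abs_re_le_norm (β * u))
  have haffine := sq_norm_sub_two_mul_le_sq_norm_add (a * u) b
  rw [norm_mul] at haffine
  rw [norm_exp, ← Real.exp_nat_mul, ← Real.exp_add, ← Real.exp_add, Real.exp_le_exp]
  nlinarith [neg_mul_sq_add_mul_le hε c ‖u‖]

theorem map_mul_add_volume (a b : ℂ) (ha : a ≠ 0) :
    Measure.map (fun u : ℂ => a * u + b) volume = ENNReal.ofReal (‖a‖ ^ 2)⁻¹ • volume := by
  have hdet : LinearMap.det (Algebra.lmul ℝ ℂ a) = ‖a‖ ^ 2 := by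
    rw [← Algebra.norm_apply, Algebra.norm_complex_apply, Complex.sq_norm]
  have hmul := Measure.map_linearMap_addHaar_eq_smul_addHaar (volume : Measure ℂ)
    (f := Algebra.lmul ℝ ℂ a) (by rw [hdet]; positivity)
  rw [hdet, abs_of_nonneg (by positivity)] at hmul
  rw [show (fun u : ℂ => a * u + b) = (· + b) ∘ (Algebra.lmul ℝ ℂ a) from rfl,
    ← Measure.map_map (measurable_add_const b)
      (LinearMap.continuous_of_finiteDimensional _).measurable,
    hmul, Measure.map_smul, (measurePreserving_add_right volume b).map_eq]

theorem lintegral_eq_mul_lintegral_comp_mul_add (a b : ℂ) (ha : a ≠ 0) (g : ℂ → ENNReal) :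
    ∫⁻ z, g z = ENNReal.ofReal (‖a‖ ^ 2) * ∫⁻ u, g (a * u + b) := by
  have hemb : MeasurableEmbedding fun u : ℂ => a * u + b :=
    ((Homeomorph.mulLeft₀ a ha).trans (Homeomorph.addRight b)).measurableEmbedding
  rw [← hemb.lintegral_map, map_mul_add_volume a b ha, lintegral_smul_measure, smul_eq_mul,
    ← mul_assoc, ← ENNReal.ofReal_mul (by positivity), mul_inv_cancel₀ (by positivity),
    ENNReal.ofReal_one, one_mul]

/-- for `|A| > 1`, the norm lower bound `L ‖W_{ψ̂,φ̂,max} f‖ ≥ ‖f‖`, showing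
the adjoint of `W_{ψ,φ,max}` has closed range. -/
theorem wco_adjoint_lower_bound (A B C D : ℂ) (hC : C ≠ 0) (hA : 1 < ‖A‖)
    (ψh φh : ℂ → ℂ)
    (hψh : ∀ z : ℂ, ψh z = conj C * Complex.exp (conj B * z))
    (hφh : ∀ z : ℂ, φh z = conj A * z + conj D) :
    ∃ L : ℝ, 0 < L ∧ ∀ f : ℂ → ℂ, Differentiable ℂ f →
      (∫⁻ z : ℂ, ENNReal.ofReal
          ((‖f z‖) ^ 2 * Real.exp (-(‖z‖) ^ 2)) < ⊤) →
      (∫⁻ z : ℂ, ENNReal.ofReal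
          ((‖ψh z * f (φh z)‖) ^ 2 * Real.exp (-(‖z‖) ^ 2)) < ⊤) →
      (∫⁻ z : ℂ, ENNReal.ofReal
          ((‖f z‖) ^ 2 * Real.exp (-(‖z‖) ^ 2))) ≤
        ENNReal.ofReal (L ^ 2) * ∫⁻ z : ℂ, ENNReal.ofReal
          ((‖ψh z * f (φh z)‖) ^ 2 * Real.exp (-(‖z‖) ^ 2)) := by
  have hA' : 1 < ‖conj A‖ := by rwa [norm_conj]
  have hA0 : conj A ≠ 0 := norm_pos_iff.1 (one_pos.trans hA')
  obtain ⟨K, hK, hweight⟩ := exists_exp_neg_sq_norm_mul_add_le (conj A) (conj D) (conj B) hA'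
  refine ⟨‖A‖ * √K / ‖C‖, by positivity, fun f _ _ _ => ?_⟩
  have hpointwise : ∀ u : ℂ,
      ENNReal.ofReal (‖f (φh u)‖ ^ 2 * Real.exp (-‖φh u‖ ^ 2)) ≤ ENNReal.ofReal (K / ‖C‖ ^ 2) *
        ENNReal.ofReal (‖ψh u * f (φh u)‖ ^ 2 * Real.exp (-‖u‖ ^ 2)) := fun u => by
    rw [← ENNReal.ofReal_mul (by positivity)]
    refine ENNReal.ofReal_le_ofReal ?_
    rw [hψh, hφh, norm_mul, norm_mul, norm_conj]
    calc ‖f (conj A * u + conj D)‖ ^ 2 * Real.exp (-‖conj A * u + conj D‖ ^ 2)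
        ≤ ‖f (conj A * u + conj D)‖ ^ 2 *
            (K * (‖exp (conj B * u)‖ ^ 2 * Real.exp (-‖u‖ ^ 2))) := by gcongr; exact hweight u
      _ = _ := by field_simp
  calc ∫⁻ z, ENNReal.ofReal (‖f z‖ ^ 2 * Real.exp (-‖z‖ ^ 2))
      = ENNReal.ofReal (‖A‖ ^ 2) *
          ∫⁻ u, ENNReal.ofReal (‖f (φh u)‖ ^ 2 * Real.exp (-‖φh u‖ ^ 2)) := by
        simp_rw [hφh, ← norm_conj A]
        exact lintegral_eq_mul_lintegral_comp_mul_add _ _ hA0 _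
    _ ≤ ENNReal.ofReal (‖A‖ ^ 2) * ∫⁻ u, ENNReal.ofReal (K / ‖C‖ ^ 2) *
          ENNReal.ofReal (‖ψh u * f (φh u)‖ ^ 2 * Real.exp (-‖u‖ ^ 2)) := by
        gcongr with u; exact hpointwise u
    _ = _ := by
        rw [lintegral_const_mul' _ _ ENNReal.ofReal_ne_top, ← mul_assoc,
          ← ENNReal.ofReal_mul (by positivity), div_pow, mul_pow, Real.sq_sqrt hK.le,
          mul_div_assoc]
end

section
/- Let a, b ∈ ℂ with |a| = 1 and conj(a)·b + conj(b) = 0, and let ψ, φ : ℂ → ℂ be entire functions with ψ not identically zero. If ψ(z)·e^{bu + φ(z)·(au + b)} = ψ(u)·e^{bφ(u) + z·(aφ(u) + b)} for all u, z ∈ ℂ, then there exist A, B ∈ ℂ such that φ(z) = Az + B for all z, and ψ(z) = ψ(0)·e^{(aB − bA + b)·z} for all z, with ψ(0) ≠ 0. -/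
open Complex ComplexConjugate

/-!
Setting `z = 0` in the functional equation expresses `ψ` through `φ` and shows `ψ 0 ≠ 0`.
Substituting this back, the factors of `ψ` cancel, and `u = 1` leaves
`exp (a φ z) = exp (a (φ 1 - φ 0) z + a φ 0)`. Entire functions with the same exponential have
the same derivative, hence differ by a constant; as `a ≠ 0`, `φ` is affine, and the formula
for `ψ` follows.
-/

namespace Complex

theorem exists_eq_add_const_of_exp_eq {f g : ℂ → ℂ} (hf : Differentiable ℂ f)
    (hg : Differentiable ℂ g) (h : ∀ z, exp (f z) = exp (g z)) :
    ∃ C, ∀ z, f z = g z + C := by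
  have hderiv : ∀ z, deriv f z = deriv g z := fun z => by
    have hdf := (hf z).hasDerivAt.cexp
    have hdg := (hg z).hasDerivAt.cexp
    rw [show (fun w => exp (f w)) = fun w => exp (g w) from funext h] at hdf
    have := hdf.unique hdg
    rwa [h z, mul_right_inj' (exp_ne_zero _)] at this
  refine ⟨f 0 - g 0, fun z => ?_⟩
  have hconst := is_const_of_deriv_eq_zero (hf.sub hg)
    (fun x => by rw [deriv_sub (hf x) (hg x), hderiv x, sub_self]) z 0
  simp only [Pi.sub_apply] at hconst
  linear_combination hconst

theorem exists_affine_of_exp_mul_eq {φ : ℂ → ℂ} (hφ : Differentiable ℂ φ) {c : ℂ} (hc : c ≠ 0)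
    (d e : ℂ) (h : ∀ z, exp (c * φ z) = exp (d * z + e)) :
    ∃ A B, ∀ z, φ z = A * z + B := by
  obtain ⟨C, hC⟩ := exists_eq_add_const_of_exp_eq (hφ.const_mul c)
    ((differentiable_id.const_mul d).add_const e) h
  refine ⟨d / c, (e + C) / c, fun z => ?_⟩
  field_simp
  linear_combination hC z

end Complex

theorem cabc_selfadjoint_necessary_general (a b : ℂ) (ha : ‖a‖ = 1)
    (ψ φ : ℂ → ℂ) (hφ : Differentiable ℂ φ)
    (hψne : ¬ ∀ z : ℂ, ψ z = 0)
    (heq : ∀ u z : ℂ, ψ z * Complex.exp (b * u + φ z * (a * u + b)) =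
        ψ u * Complex.exp (b * φ u + z * (a * φ u + b))) :
    ∃ A B : ℂ, (∀ z : ℂ, φ z = A * z + B) ∧
      (∀ z : ℂ, ψ z = ψ 0 * Complex.exp ((a * B - b * A + b) * z)) ∧ ψ 0 ≠ 0 := by
  have ha0 : a ≠ 0 := by rintro rfl; simp at ha
  have hψ_eq : ∀ u, ψ u = ψ 0 * exp (b * u + φ 0 * (a * u + b) - b * φ u) := fun u => by
    rw [exp_sub, ← mul_div_assoc, eq_div_iff (exp_ne_zero _)]
    simpa using (heq u 0).symm
  have hψ0 : ψ 0 ≠ 0 := fun h0 => hψne fun u => by simpa [h0] using hψ_eq u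
  have hexp : ∀ z, exp (a * φ z) = exp (a * (φ 1 - φ 0) * z + a * φ 0) := fun z => by
    have h := heq 1 z
    rw [hψ_eq z, hψ_eq 1, mul_assoc, mul_assoc, ← exp_add, ← exp_add,
      mul_right_inj' hψ0] at h
    calc exp (a * φ z) = exp (b * z + φ 0 * (a * z + b) - b * φ z + (b * 1 + φ z * (a * 1 + b)))
          * exp (-(b * z + b * φ 0 + b + a * φ 0 * z)) := by rw [← exp_add]; congr 1; ring
      _ = exp (a * (φ 1 - φ 0) * z + a * φ 0) := by rw [h, ← exp_add]; congr 1; ring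
  obtain ⟨A, B, hφ_lin⟩ := exists_affine_of_exp_mul_eq hφ ha0 _ _ hexp
  refine ⟨A, B, hφ_lin, fun z => ?_, hψ0⟩
  rw [hψ_eq z, hφ_lin z, hφ_lin 0]
  ring_nf

/-- the necessary condition for `C_{a,b,c}`-selfadjointness: the functional
equation on reproducing kernels forces `φ(z) = Az + B` and `ψ(z) = ψ(0) e^{(aB - bA + b)z}`. -/
theorem cabc_selfadjoint_necessary (a b : ℂ) (ha : ‖a‖ = 1)
    (hab : conj a * b + conj b = 0)
    (ψ φ : ℂ → ℂ) (hψ : Differentiable ℂ ψ) (hφ : Differentiable ℂ φ)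
    (hψne : ¬ ∀ z : ℂ, ψ z = 0)
    (heq : ∀ u z : ℂ, ψ z * Complex.exp (b * u + φ z * (a * u + b)) =
        ψ u * Complex.exp (b * φ u + z * (a * φ u + b))) :
    ∃ A B : ℂ, (∀ z : ℂ, φ z = A * z + B) ∧
      (∀ z : ℂ, ψ z = ψ 0 * Complex.exp ((a * B - b * A + b) * z)) ∧ ψ 0 ≠ 0 :=
  cabc_selfadjoint_necessary_general a b ha ψ φ hφ hψne heq
end

section
/- Let a, b, c ∈ ℂ satisfy |a| = 1, conj(a)·b + conj(b) = 0 and |c|²·e^{|b|²} = 1, let A, B ∈ ℂ, C ∈ ℂ \ {0}, and D = aB − bA + b. Set ψ(z) = C·e^{Dz}, φ(z) = Az + B, ψ̂(z) = conj(C)·e^{conj(B)·z}, φ̂(z) = conj(A)·z + conj(D). Then for every function f : ℂ → ℂ and every z ∈ ℂ one has C_{a,b,c}(ψ·((C_{a,b,c}f)∘φ))(z) = ψ̂(z)·f(φ̂(z)); that is, C_{a,b,c} E(ψ,φ) C_{a,b,c} = E(ψ̂,φ̂). -/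
open Complex ComplexConjugate

/-! The hypotheses `|a| = 1` and `ā b + b̄ = 0` make `z ↦ conj (a z + b)` an involution, which
turns the composed symbol into `Āz + D̄`. The two weights `c e^{bz}` contributed by the two
applications of `C_{a,b,c}` combine with `e^{Dz}` into `|c|² e^{|b|²} e^{B̄z} = e^{B̄z}`. -/

/-- The weighted composition conjugation `C_{a,b,c}`. -/
noncomputable def weightedCompConj (a b c : ℂ) (f : ℂ → ℂ) : ℂ → ℂ :=
  fun z => c * exp (b * z) * conj (f (conj (a * z + b)))

/-- The weighted composition operator `E(ψ,φ)`. -/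
def weightedComp (ψ φ : ℂ → ℂ) (f : ℂ → ℂ) : ℂ → ℂ :=
  fun z => ψ z * f (φ z)

lemma conj_mul_self_of_norm_eq_one {a : ℂ} (ha : ‖a‖ = 1) : conj a * a = 1 := by
  rw [conj_mul', ha, ofReal_one, one_pow]

lemma conj_mul_exp_normSq {b c : ℂ} (hc : ‖c‖ ^ 2 * Real.exp (‖b‖ ^ 2) = 1) :
    c * conj c * exp (conj b * b) = 1 := by
  rw [mul_conj', conj_mul', ← ofReal_pow, ← ofReal_pow, ← ofReal_exp, ← ofReal_mul, hc,
    ofReal_one]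

lemma conj_affine_comp_affine {a b : ℂ} (ha : conj a * a = 1) (hab : conj a * b + conj b = 0)
    (A B z : ℂ) :
    conj (a * (A * conj (a * z + b) + B) + b) = conj A * z + conj (a * B - b * A + b) := by
  simp only [map_add, map_sub, map_mul, conj_conj]
  linear_combination conj A * z * ha + conj A * hab

lemma exponent_comp_affine {a b : ℂ} (ha : conj a * a = 1) (hab : conj a * b + conj b = 0)
    (A B z : ℂ) :
    b * z + conj (a * B - b * A + b) * (a * z + b) + conj b * conj (A * conj (a * z + b) + B)
      = conj B * z + conj b * b := by
  have hab' : a * conj b + b = 0 := by simpa using congrArg conj hab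
  simp only [map_add, map_sub, map_mul, conj_conj]
  linear_combination conj B * z * ha + conj B * hab + z * hab'

theorem weightedCompConj_weightedComp_weightedCompConj {a b c : ℂ} (ha : ‖a‖ = 1)
    (hab : conj a * b + conj b = 0) (hc : ‖c‖ ^ 2 * Real.exp (‖b‖ ^ 2) = 1) (A B C : ℂ)
    (f : ℂ → ℂ) :
    weightedCompConj a b c
        (weightedComp (fun w => C * exp ((a * B - b * A + b) * w)) (fun w => A * w + B)
          (weightedCompConj a b c f)) =
      weightedComp (fun z => conj C * exp (conj B * z))
        (fun z => conj A * z + conj (a * B - b * A + b)) f := by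
  have ha' := conj_mul_self_of_norm_eq_one ha
  funext z
  simp only [weightedCompConj, weightedComp, map_mul, conj_conj, ← exp_conj]
  rw [conj_affine_comp_affine ha' hab A B z]
  calc c * exp (b * z) * (conj C * exp (conj (a * B - b * A + b) * (a * z + b)) *
        (conj c * exp (conj b * conj (A * conj (a * z + b) + B)) *
          f (conj A * z + conj (a * B - b * A + b))))
      = c * conj c * exp (b * z + conj (a * B - b * A + b) * (a * z + b) +
          conj b * conj (A * conj (a * z + b) + B)) *
          (conj C * f (conj A * z + conj (a * B - b * A + b))) := by
        rw [exp_add, exp_add]; ring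
    _ = c * conj c * exp (conj b * b) *
          (conj C * exp (conj B * z) * f (conj A * z + conj (a * B - b * A + b))) := by
        rw [exponent_comp_affine ha' hab A B z, exp_add]; ring
    _ = conj C * exp (conj B * z) * f (conj A * z + conj (a * B - b * A + b)) := by
        rw [conj_mul_exp_normSq hc, one_mul]

theorem cabc_conjugation_identity_general (a b c : ℂ) (ha : ‖a‖ = 1)
    (hab : conj a * b + conj b = 0) (hc : ‖c‖ ^ 2 * Real.exp (‖b‖ ^ 2) = 1)
    (A B C : ℂ) (D : ℂ) (hD : D = a * B - b * A + b)
    (ψ φ ψh φh : ℂ → ℂ)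
    (hψ : ∀ z : ℂ, ψ z = C * Complex.exp (D * z))
    (hφ : ∀ z : ℂ, φ z = A * z + B)
    (hψh : ∀ z : ℂ, ψh z = conj C * Complex.exp (conj B * z))
    (hφh : ∀ z : ℂ, φh z = conj A * z + conj D)
    (Cabc : (ℂ → ℂ) → (ℂ → ℂ))
    (hCabc : ∀ (f : ℂ → ℂ) (z : ℂ), Cabc f z = c * Complex.exp (b * z) * conj (f (conj (a * z + b)))) :
    ∀ (f : ℂ → ℂ) (z : ℂ),
      Cabc (fun w => ψ w * (Cabc f) (φ w)) z = ψh z * f (φh z) := by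
  intro f z
  obtain rfl : Cabc = weightedCompConj a b c := funext fun f => funext (hCabc f)
  obtain rfl : ψ = fun w => C * exp (D * w) := funext hψ
  obtain rfl : φ = fun w => A * w + B := funext hφ
  obtain rfl : ψh = fun z => conj C * exp (conj B * z) := funext hψh
  obtain rfl : φh = fun z => conj A * z + conj D := funext hφh
  subst hD
  exact congrFun (weightedCompConj_weightedComp_weightedCompConj ha hab hc A B C f) z

/-- `C_{a,b,c} E(ψ,φ) C_{a,b,c} = E(ψ̂,φ̂)` where `(C_{a,b,c}f)(z) =
c e^{bz} conj(f(conj(az + b)))`, `ψ(z) = C e^{Dz}`, `φ(z) = Az + B`, `D = aB - bA + b`,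
`ψ̂(z) = C̄ e^{B̄z}`, `φ̂(z) = Āz + D̄`. -/
theorem cabc_conjugation_identity (a b c : ℂ) (ha : ‖a‖ = 1)
    (hab : conj a * b + conj b = 0) (hc : ‖c‖ ^ 2 * Real.exp (‖b‖ ^ 2) = 1)
    (A B C : ℂ) (hC : C ≠ 0) (D : ℂ) (hD : D = a * B - b * A + b)
    (ψ φ ψh φh : ℂ → ℂ)
    (hψ : ∀ z : ℂ, ψ z = C * Complex.exp (D * z))
    (hφ : ∀ z : ℂ, φ z = A * z + B)
    (hψh : ∀ z : ℂ, ψh z = conj C * Complex.exp (conj B * z))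
    (hφh : ∀ z : ℂ, φh z = conj A * z + conj D)
    (Cabc : (ℂ → ℂ) → (ℂ → ℂ))
    (hCabc : ∀ (f : ℂ → ℂ) (z : ℂ), Cabc f z = c * Complex.exp (b * z) * conj (f (conj (a * z + b)))) :
    ∀ (f : ℂ → ℂ) (z : ℂ),
      Cabc (fun w => ψ w * (Cabc f) (φ w)) z = ψh z * f (φh z) :=
  cabc_conjugation_identity_general a b c ha hab hc A B C D hD ψ φ ψh φh hψ hφ hψh hφh Cabc hCabc
end

section
/- Let ψ, φ : ℂ → ℂ be entire functions with ψ not identically zero. If ψ(u)·e^{φ(u)·conj(z)} = conj(ψ(z))·e^{u·conj(φ(z))} for all u, z ∈ ℂ, then there exist A ∈ ℝ, B ∈ ℂ and C ∈ ℝ \ {0} such that φ(z) = Az + B and ψ(z) = C·e^{conj(B)·z} for all z ∈ ℂ. -/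
open Complex ComplexConjugate

/-- the necessary condition for Hermiticity: the kernel functional equation
forces `φ(z) = Az + B` with `A ∈ ℝ` and `ψ(z) = C e^{B̄z}` with `C ∈ ℝ \ {0}`. -/
theorem hermitian_necessary (ψ φ : ℂ → ℂ) (hψ : Differentiable ℂ ψ) (hφ : Differentiable ℂ φ)
    (hψne : ¬ ∀ z : ℂ, ψ z = 0)
    (heq : ∀ u z : ℂ, ψ u * Complex.exp (φ u * conj z) =
        conj (ψ z) * Complex.exp (u * conj (φ z))) :
    ∃ (A : ℝ) (B : ℂ) (C : ℝ), C ≠ 0 ∧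
      (∀ z : ℂ, φ z = (A : ℂ) * z + B) ∧
      (∀ z : ℂ, ψ z = (C : ℂ) * Complex.exp (conj B * z)) := by
  set B := φ 0 with hB
  have hψform : ∀ u : ℂ, ψ u = conj (ψ 0) * Complex.exp (u * conj B) := by
    intro u
    have h := heq u 0
    simpa using h
  have hconj : conj (ψ 0) = ψ 0 := by
    have := hψform 0
    simpa using this.symm
  have hψ0ne : ψ 0 ≠ 0 := by
    intro h0
    apply hψne
    intro z
    rw [hψform z, h0, map_zero, zero_mul]
  have hexp : ∀ u z : ℂ, Complex.exp
      (u * conj B + φ u * conj z - (B * conj z + u * conj (φ z))) = 1 := by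
    intro u z
    have h2 : Complex.exp (u * conj B) * Complex.exp (φ u * conj z)
        = Complex.exp (conj z * B) * Complex.exp (u * conj (φ z)) := by
      apply mul_left_cancel₀ hψ0ne
      have e1 : conj (Complex.exp (z * conj B)) = Complex.exp (conj z * B) := by
        rw [← Complex.exp_conj, map_mul, Complex.conj_conj]
      calc ψ 0 * (Complex.exp (u * conj B) * Complex.exp (φ u * conj z))
          = (conj (ψ 0) * Complex.exp (u * conj B)) * Complex.exp (φ u * conj z) := by
            rw [hconj]; ring
        _ = conj (conj (ψ 0) * Complex.exp (z * conj B)) * Complex.exp (u * conj (φ z)) := by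
            rw [← hψform u, ← hψform z]; exact heq u z
        _ = ψ 0 * (Complex.exp (conj z * B) * Complex.exp (u * conj (φ z))) := by
            rw [map_mul, Complex.conj_conj, e1]; ring
    rw [← Complex.exp_add, ← Complex.exp_add] at h2
    have hY : B * conj z + u * conj (φ z) = conj z * B + u * conj (φ z) := by ring
    rw [Complex.exp_sub, hY, h2, div_self (Complex.exp_ne_zero _)]
  have hexp' : ∀ u z : ℂ, Complex.exp
      (conj u * B + conj (φ u) * z - (conj B * z + conj u * φ z)) = 1 := by
    intro u z
    have h := congrArg conj (hexp u z)
    rw [← Complex.exp_conj] at h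
    simp only [map_sub, map_add, map_mul, Complex.conj_conj, map_one] at h
    exact h
  have hg : ∀ u z : ℂ, conj u * B + conj (φ u) * z - (conj B * z + conj u * φ z) = 0 := by
    intro u
    set g : ℂ → ℂ := fun z => conj u * B + conj (φ u) * z - (conj B * z + conj u * φ z)
      with hgdef
    have hgdiff : Differentiable ℂ g := by
      apply Differentiable.sub
      · exact (differentiable_const _).add (differentiable_id.const_mul _)
      · exact (differentiable_id.const_mul _).add (hφ.const_mul _)
    have hderiv0 : ∀ z, deriv g z = 0 := by
      intro z
      have h1 : HasDerivAt (fun z => Complex.exp (g z)) (Complex.exp (g z) * deriv g z) z :=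
        (hgdiff z).hasDerivAt.cexp
      have h2 : HasDerivAt (fun z => Complex.exp (g z)) 0 z := by
        have he : (fun z => Complex.exp (g z)) = fun _ => (1 : ℂ) := funext (hexp' u)
        rw [he]
        exact hasDerivAt_const z 1
      have h3 := h1.unique h2
      exact (mul_eq_zero.mp h3).resolve_left (Complex.exp_ne_zero (g z))
    intro z
    have hc := is_const_of_deriv_eq_zero hgdiff hderiv0 z 0
    have hg0 : g 0 = 0 := by simp [hgdef, ← hB]
    rw [← hg0]
    exact hc
  have hlin : ∀ z : ℂ, φ z = (conj (φ 1) - conj B) * z + B := by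
    intro z
    have h := hg 1 z
    simp only [map_one, one_mul] at h
    linear_combination -h
  have hreal : conj (φ 1) - conj B = φ 1 - B := by
    have h := hg 1 1
    simp only [map_one, one_mul, mul_one] at h
    linear_combination h
  obtain ⟨C, hC⟩ : ∃ C : ℝ, (C : ℂ) = ψ 0 := ⟨(ψ 0).re, Complex.conj_eq_iff_re.mp hconj⟩
  refine ⟨(φ 1 - B).re, B, C, ?_, ?_, ?_⟩
  · intro h
    apply hψ0ne
    rw [← hC, h]; simp
  · intro z
    have hA : ((φ 1 - B).re : ℂ) = φ 1 - B := by
      have hc2 : conj (φ 1 - B) = φ 1 - B := by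
        rw [map_sub]; linear_combination hreal
      exact Complex.conj_eq_iff_re.mp hc2
    rw [hlin z, hreal, hA]
  · intro z
    rw [hψform z, hconj, ← hC, mul_comm z]
end

section
/- Let A, B, C, D ∈ ℂ with C ≠ 0, A ≠ 0, and conj(A)·D = A·conj(B) − conj(B) + D. Set ψ(z) = C·e^{Dz}, φ(z) = Az + B, ψ̂(z) = conj(C)·e^{conj(B)·z}, φ̂(z) = conj(A)·z + conj(D), and M = exp(−|(B − conj(D))/A|² + 2·Re((|B|² − conj(B)·conj(D))/conj(A))). Then for every entire function f : ℂ → ℂ, ∫_ℂ |ψ̂(z)·f(φ̂(z))|²·e^{−|z|²} dV(z) = M·∫_ℂ |ψ(z)·f(φ(z))|²·e^{−|z|²} dV(z) (as an identity in [0,∞]). Moreover, if A = 1 then M = e^{|B|² − |D|²}, and if A ≠ 1 and D = conj(B)·(1 − A)·(1 − conj(A))^{−1} then M = 1. -/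
/-!
The substitution `z = T y`, `T y = (A / conj A) y + (B - conj D) / conj A`, is a rotation followed
by a translation, hence preserves Lebesgue measure, and it satisfies `φ̂ ∘ T = φ`. Writing
`|c e^{dz}|² e^{-|z|²} = |c|² e^{2 Re(dz) - |z|²}`, the relation `conj A * D = A B̄ - B̄ + D` is exactly
what makes the real quadratic exponents `2 Re(B̄ T y) - |T y|²` and `2 Re(D y) - |y|²` differ by a
constant, namely `log M`.
-/

open MeasureTheory Complex ComplexConjugate

lemma lintegral_comp_circle_mul_add (u : Circle) (b : ℂ) (g : ℂ → ENNReal) :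
    ∫⁻ z, g (u * z + b) = ∫⁻ z, g z := by
  let e : ℂ ≃ₜ ℂ := (rotation u).toHomeomorph.trans (Homeomorph.addRight b)
  have he : MeasurePreserving e :=
    (measurePreserving_add_right volume b).comp (rotation u).measurePreserving
  exact he.lintegral_comp_emb e.measurableEmbedding g

lemma sq_norm_mul_exp_mul_mul_gaussian (c d w z : ℂ) :
    ‖c * exp (d * z) * w‖ ^ 2 * Real.exp (-‖z‖ ^ 2) =
      ‖c‖ ^ 2 * ‖w‖ ^ 2 * Real.exp (2 * (d * z).re - ‖z‖ ^ 2) := by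
  rw [norm_mul, norm_mul, norm_exp, sub_eq_add_neg, Real.exp_add, two_mul, Real.exp_add]
  ring

noncomputable def gaussShiftExponent (A B D : ℂ) : ℝ :=
  -(‖(B - conj D) / A‖) ^ 2 + 2 * (((‖B‖ : ℂ) ^ 2 - conj B * conj D) / conj A).re

lemma two_re_mul_sub_sq_norm_affine {A B D : ℂ} (hA : A ≠ 0)
    (hAD : conj A * D = A * conj B - conj B + D) (y : ℂ) :
    2 * (conj B * (A / conj A * y + (B - conj D) / conj A)).re
        - ‖A / conj A * y + (B - conj D) / conj A‖ ^ 2 =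
      gaussShiftExponent A B D + (2 * (D * y).re - ‖y‖ ^ 2) := by
  have hA' : conj A ≠ 0 := (map_ne_zero _).2 hA
  have hAD' : A * conj D = conj A * B - B + conj D := by
    simpa using congrArg conj hAD
  rw [gaussShiftExponent, ← ofReal_inj]
  push_cast
  simp only [← mul_conj', re_eq_add_conj]
  simp only [map_mul, map_sub, map_add, map_div₀, conj_conj]
  field_simp
  linear_combination (-(A * y)) * hAD + (-(conj A * conj y)) * hAD'

lemma gaussShiftExponent_one_left (B D : ℂ) :
    gaussShiftExponent 1 B D = ‖B‖ ^ 2 - ‖D‖ ^ 2 := by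
  rw [gaussShiftExponent, ← ofReal_inj]
  push_cast
  simp only [← mul_conj', re_eq_add_conj]
  simp only [map_one, map_mul, map_sub, map_div₀, conj_conj]
  ring

lemma gaussShiftExponent_eq_zero {A B D : ℂ} (hA : A ≠ 0) (hA1 : A ≠ 1)
    (hD : D = conj B * (1 - A) * (1 - conj A)⁻¹) : gaussShiftExponent A B D = 0 := by
  have hA' : conj A ≠ 0 := (map_ne_zero _).2 hA
  have h1A : 1 - A ≠ 0 := sub_ne_zero.2 hA1.symm
  have h1A' : 1 - conj A ≠ 0 := by simpa using (map_ne_zero conj).2 h1A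
  rw [gaussShiftExponent, ← ofReal_inj, hD]
  push_cast
  simp only [← mul_conj', re_eq_add_conj]
  simp only [map_mul, map_sub, map_div₀, map_one, map_inv₀, conj_conj]
  field_simp
  ring

theorem wco_norm_change_of_variables_general (A B C D : ℂ) (hA : A ≠ 0)
    (hAD : conj A * D = A * conj B - conj B + D)
    (ψ φ ψh φh : ℂ → ℂ)
    (hψ : ∀ z : ℂ, ψ z = C * Complex.exp (D * z))
    (hφ : ∀ z : ℂ, φ z = A * z + B)
    (hψh : ∀ z : ℂ, ψh z = conj C * Complex.exp (conj B * z))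
    (hφh : ∀ z : ℂ, φh z = conj A * z + conj D)
    (M : ℝ)
    (hM : M = Real.exp (-(‖(B - conj D) / A‖) ^ 2 +
        2 * (((‖B‖ : ℂ) ^ 2 - conj B * conj D) / conj A).re)) :
    (∀ f : ℂ → ℂ, Differentiable ℂ f →
      ∫⁻ z : ℂ, ENNReal.ofReal
          ((‖ψh z * f (φh z)‖) ^ 2 * Real.exp (-(‖z‖) ^ 2)) =
        ENNReal.ofReal M * ∫⁻ z : ℂ, ENNReal.ofReal
          ((‖ψ z * f (φ z)‖) ^ 2 * Real.exp (-(‖z‖) ^ 2))) ∧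
    (A = 1 → M = Real.exp ((‖B‖) ^ 2 - (‖D‖) ^ 2)) ∧
    (A ≠ 1 → D = conj B * (1 - A) * (1 - conj A)⁻¹ → M = 1) := by
  change M = Real.exp (gaussShiftExponent A B D) at hM
  have hA' : conj A ≠ 0 := (map_ne_zero _).2 hA
  refine ⟨fun f _ => ?_, fun hA1 => ?_, fun hA1 hD => ?_⟩
  · set u := Circle.ofConjDivSelf (conj A) hA'
    have hu : (u : ℂ) = A / conj A := by simp [u]
    have hφh_shift (y : ℂ) : φh (u * y + (B - conj D) / conj A) = φ y := by
      rw [hφh, hφ, hu]; field_simp; ring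
    calc _ = ∫⁻ y, ENNReal.ofReal (‖ψh (u * y + (B - conj D) / conj A) * f (φ y)‖ ^ 2 *
            Real.exp (-‖(u * y + (B - conj D) / conj A : ℂ)‖ ^ 2)) := by
          rw [← lintegral_comp_circle_mul_add u ((B - conj D) / conj A)]
          simp_rw [hφh_shift]
      _ = ∫⁻ y, ENNReal.ofReal M * ENNReal.ofReal (‖ψ y * f (φ y)‖ ^ 2 * Real.exp (-‖y‖ ^ 2)) := by
          refine lintegral_congr fun y => ?_
          rw [← ENNReal.ofReal_mul (hM ▸ (Real.exp_pos _).le), hψh, hψ,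
            sq_norm_mul_exp_mul_mul_gaussian, sq_norm_mul_exp_mul_mul_gaussian, hu,
            two_re_mul_sub_sq_norm_affine hA hAD, hM, Real.exp_add, norm_conj]
          ring_nf
      _ = _ := lintegral_const_mul' _ _ ENNReal.ofReal_ne_top
  · subst hA1
    rw [hM, gaussShiftExponent_one_left]
  · rw [hM, gaussShiftExponent_eq_zero hA hA1 hD, Real.exp_zero]

/-- the change-of-variables identity
`∫ |ψ̂ (f∘φ̂)|² e^{-|z|²} = M ∫ |ψ (f∘φ)|² e^{-|z|²}` when `A ≠ 0` and
`conj(A) D = A B̄ - B̄ + D`, together with the two special evaluations of `M`. -/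
theorem wco_norm_change_of_variables (A B C D : ℂ) (hC : C ≠ 0) (hA : A ≠ 0)
    (hAD : conj A * D = A * conj B - conj B + D)
    (ψ φ ψh φh : ℂ → ℂ)
    (hψ : ∀ z : ℂ, ψ z = C * Complex.exp (D * z))
    (hφ : ∀ z : ℂ, φ z = A * z + B)
    (hψh : ∀ z : ℂ, ψh z = conj C * Complex.exp (conj B * z))
    (hφh : ∀ z : ℂ, φh z = conj A * z + conj D)
    (M : ℝ)
    (hM : M = Real.exp (-(‖(B - conj D) / A‖) ^ 2 +
        2 * (((‖B‖ : ℂ) ^ 2 - conj B * conj D) / conj A).re)) :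
    (∀ f : ℂ → ℂ, Differentiable ℂ f →
      ∫⁻ z : ℂ, ENNReal.ofReal
          ((‖ψh z * f (φh z)‖) ^ 2 * Real.exp (-(‖z‖) ^ 2)) =
        ENNReal.ofReal M * ∫⁻ z : ℂ, ENNReal.ofReal
          ((‖ψ z * f (φ z)‖) ^ 2 * Real.exp (-(‖z‖) ^ 2))) ∧
    (A = 1 → M = Real.exp ((‖B‖) ^ 2 - (‖D‖) ^ 2)) ∧
    (A ≠ 1 → D = conj B * (1 - A) * (1 - conj A)⁻¹ → M = 1) :=
  wco_norm_change_of_variables_general A B C D hA hAD ψ φ ψh φh hψ hφ hψh hφh M hM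
end

section
/- Let A, B, C, D ∈ ℂ with C ≠ 0, and suppose that either (i) A ≠ 1 and D = conj(B)·(1 − A)·(1 − conj(A))^{−1}, or (ii) A = 1 and |D| ≤ |B|. Set ψ(z) = C·e^{Dz}, φ(z) = Az + B, ψ̂(z) = conj(C)·e^{conj(B)·z}, φ̂(z) = conj(A)·z + conj(D). Then for every entire function f : ℂ → ℂ, ∫_ℂ |ψ̂(z)·f(φ̂(z))|²·e^{−|z|²} dV(z) ≥ ∫_ℂ |ψ(z)·f(φ(z))|²·e^{−|z|²} dV(z) (as an inequality in [0,∞]). (This is the cohyponormality inequality ‖W*f‖ ≥ ‖Wf‖ for the maximal weighted composition operator W = W_{ψ,φ,max}, whose adjoint is W_{ψ̂,φ̂,max}.) -/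
/-!
Both conditions amount to `(1 - A) * conj D = B * (1 - conj A)` and `‖D‖ ≤ ‖B‖`. For `A ≠ 0`
substitute `z = τ w := (conj A * w + conj D - B) / A`: a rotation followed by a translation, so
measure preserving, with `φ (τ w) = φh w` and, by the first condition,
`τ w - conj D = (conj A / A) * (w - B)`. As `‖exp (D * u)‖² * e^{-‖u‖²} = e^{‖D‖² - ‖u - conj D‖²}`,
the weight at `τ w` is at most `e^{‖B‖² - ‖w - B‖²}`, the weight of the right integrand at `w`.
For `A = 0` the two integrands coincide.
-/

open MeasureTheory Complex ComplexConjugate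

theorem lintegral_comp_mul_add_of_norm_eq_one {a : ℂ} (ha : ‖a‖ = 1) (b : ℂ) (g : ℂ → ENNReal) :
    ∫⁻ w, g (a * w + b) = ∫⁻ z, g z := by
  let c : Circle := ⟨a, mem_sphere_zero_iff_norm.2 ha⟩
  calc ∫⁻ w, g (a * w + b) = ∫⁻ w, (fun z => g (z + b)) (rotation c w) := rfl
    _ = ∫⁻ z, g (z + b) :=
      (rotation c).measurePreserving.lintegral_comp_emb
        (rotation c).toHomeomorph.measurableEmbedding (fun z => g (z + b))
    _ = ∫⁻ z, g z := lintegral_add_right_eq_self g b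

theorem norm_exp_mul_sq_mul_exp_neg_sq (D u : ℂ) :
    ‖exp (D * u)‖ ^ 2 * Real.exp (-‖u‖ ^ 2) = Real.exp (‖D‖ ^ 2 - ‖u - conj D‖ ^ 2) := by
  rw [norm_exp, ← Real.exp_nat_mul, ← Real.exp_add]
  congr 1
  simp only [Complex.sq_norm, normSq_sub, normSq_conj, conj_conj, mul_comm u D]
  push_cast
  ring

theorem norm_mul_exp_mul_mul_sq_mul_exp_neg_sq_le {B D u w : ℂ} (C F : ℂ) (hDB : ‖D‖ ≤ ‖B‖)
    (huw : ‖u - conj D‖ = ‖w - B‖) :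
    ‖C * exp (D * u) * F‖ ^ 2 * Real.exp (-‖u‖ ^ 2) ≤
      ‖conj C * exp (conj B * w) * F‖ ^ 2 * Real.exp (-‖w‖ ^ 2) := by
  have hweight := norm_exp_mul_sq_mul_exp_neg_sq D u
  have hweight' := norm_exp_mul_sq_mul_exp_neg_sq (conj B) w
  rw [conj_conj, norm_conj, ← huw] at hweight'
  calc ‖C * exp (D * u) * F‖ ^ 2 * Real.exp (-‖u‖ ^ 2)
      = ‖C‖ ^ 2 * ‖F‖ ^ 2 * Real.exp (‖D‖ ^ 2 - ‖u - conj D‖ ^ 2) := by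
        rw [← hweight, norm_mul, norm_mul]; ring
    _ ≤ ‖C‖ ^ 2 * ‖F‖ ^ 2 * Real.exp (‖B‖ ^ 2 - ‖u - conj D‖ ^ 2) := by gcongr
    _ = ‖conj C * exp (conj B * w) * F‖ ^ 2 * Real.exp (-‖w‖ ^ 2) := by
        rw [← hweight', norm_mul, norm_mul, norm_conj]; ring

theorem sub_mul_conj_eq_and_norm_le_of_cohyponormal_condition {A B D : ℂ}
    (hcond : (A ≠ 1 ∧ D = conj B * (1 - A) * (1 - conj A)⁻¹) ∨ (A = 1 ∧ ‖D‖ ≤ ‖B‖)) :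
    (1 - A) * conj D = B * (1 - conj A) ∧ ‖D‖ ≤ ‖B‖ := by
  rcases hcond with ⟨hA, rfl⟩ | ⟨rfl, hDB⟩
  · have hsub : 1 - A ≠ 0 := sub_ne_zero.2 hA.symm
    have hnorm : ‖1 - conj A‖ = ‖1 - A‖ := by rw [← norm_conj, map_sub, map_one, conj_conj]
    have hsub_conj : 1 - conj A ≠ 0 := norm_ne_zero_iff.1 (hnorm ▸ norm_ne_zero_iff.2 hsub)
    refine ⟨?_, le_of_eq ?_⟩
    · simp only [map_mul, map_inv₀, map_sub, map_one, conj_conj]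
      field_simp
    · rw [norm_mul, norm_mul, norm_inv, norm_conj, hnorm,
        mul_inv_cancel_right₀ (norm_ne_zero_iff.2 hsub)]
  · simp [hDB]

theorem wco_cohyponormal_inequality_general (A B C D : ℂ)
    (hcond : (A ≠ 1 ∧ D = conj B * (1 - A) * (1 - conj A)⁻¹) ∨
      (A = 1 ∧ ‖D‖ ≤ ‖B‖))
    (ψ φ ψh φh : ℂ → ℂ)
    (hψ : ∀ z : ℂ, ψ z = C * Complex.exp (D * z))
    (hφ : ∀ z : ℂ, φ z = A * z + B)
    (hψh : ∀ z : ℂ, ψh z = conj C * Complex.exp (conj B * z))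
    (hφh : ∀ z : ℂ, φh z = conj A * z + conj D) :
    ∀ f : ℂ → ℂ, Differentiable ℂ f →
      ∫⁻ z : ℂ, ENNReal.ofReal
          ((‖ψ z * f (φ z)‖) ^ 2 * Real.exp (-(‖z‖) ^ 2)) ≤
        ∫⁻ z : ℂ, ENNReal.ofReal
          ((‖ψh z * f (φh z)‖) ^ 2 * Real.exp (-(‖z‖) ^ 2)) := by
  intro f _
  obtain ⟨hlin, hDB⟩ := sub_mul_conj_eq_and_norm_le_of_cohyponormal_condition hcond
  simp only [hψ, hφ, hψh, hφh]
  rcases eq_or_ne A 0 with rfl | hA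
  · obtain rfl : D = conj B := by simpa using congrArg conj hlin
    simp only [conj_conj, map_zero, zero_mul, zero_add, norm_mul, norm_conj]
    exact le_rfl
  · have ha : ‖conj A / A‖ = 1 := by rw [norm_div, norm_conj, div_self (norm_ne_zero_iff.2 hA)]
    rw [← lintegral_comp_mul_add_of_norm_eq_one ha ((conj D - B) / A)]
    refine lintegral_mono fun w => ENNReal.ofReal_le_ofReal ?_
    have hφτ : A * (conj A / A * w + (conj D - B) / A) + B = conj A * w + conj D := by
      field_simp; ring
    have hτ : conj A / A * w + (conj D - B) / A - conj D = conj A / A * (w - B) := by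
      field_simp; linear_combination hlin
    rw [hφτ]
    exact norm_mul_exp_mul_mul_sq_mul_exp_neg_sq_le C _ hDB (by rw [hτ, norm_mul, ha, one_mul])

/-- the cohyponormality inequality `‖W* f‖ ≥ ‖W f‖` (as integrals in `[0,∞]`)
under condition (i) `A ≠ 1` and `D = B̄(1-A)(1-Ā)⁻¹`, or (ii) `A = 1` and `|D| ≤ |B|`. -/
theorem wco_cohyponormal_inequality (A B C D : ℂ) (hC : C ≠ 0)
    (hcond : (A ≠ 1 ∧ D = conj B * (1 - A) * (1 - conj A)⁻¹) ∨
      (A = 1 ∧ ‖D‖ ≤ ‖B‖))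
    (ψ φ ψh φh : ℂ → ℂ)
    (hψ : ∀ z : ℂ, ψ z = C * Complex.exp (D * z))
    (hφ : ∀ z : ℂ, φ z = A * z + B)
    (hψh : ∀ z : ℂ, ψh z = conj C * Complex.exp (conj B * z))
    (hφh : ∀ z : ℂ, φh z = conj A * z + conj D) :
    ∀ f : ℂ → ℂ, Differentiable ℂ f →
      ∫⁻ z : ℂ, ENNReal.ofReal
          ((‖ψ z * f (φ z)‖) ^ 2 * Real.exp (-(‖z‖) ^ 2)) ≤
        ∫⁻ z : ℂ, ENNReal.ofReal
          ((‖ψh z * f (φh z)‖) ^ 2 * Real.exp (-(‖z‖) ^ 2)) :=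
  wco_cohyponormal_inequality_general A B C D hcond ψ φ ψh φh hψ hφ hψh hφh
end

section
/- Let B, C, D ∈ ℂ with C ≠ 0, and set ψ(z) = C·e^{Dz}, φ(z) = z + B, ψ̂(z) = conj(C)·e^{conj(B)·z}, φ̂(z) = z + conj(D). If ∫_ℂ |ψ̂(z)·f(φ̂(z))|²·e^{−|z|²} dV(z) = ∫_ℂ |ψ(z)·f(φ(z))|²·e^{−|z|²} dV(z) for every entire function f ∈ F², then |D| = |B|. (This is the necessity of |D| = |B| for normality of W_{ψ,φ,max} in the translation case A = 1.) -/
/-!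
Test the identity on `f ≡ 1`. Completing the square,
`|c e^{wz}|² e^{-|z|²} = |c|² e^{|w|²} e^{-|z - w̄|²}`, so by translation invariance
of Lebesgue measure the two sides are `|C|² e^{|B|²} π` and `|C|² e^{|D|²} π`.
-/

open MeasureTheory Complex ComplexConjugate

theorem integral_gaussian_complex_plane : ∫ z : ℂ, Real.exp (-‖z‖ ^ 2) = Real.pi := by
  simpa using GaussianFourier.integral_rexp_neg_mul_sq_norm (V := ℂ) one_pos

theorem lintegral_gaussian_complex_plane :
    ∫⁻ z : ℂ, ENNReal.ofReal (Real.exp (-‖z‖ ^ 2)) = ENNReal.ofReal Real.pi := by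
  have hint : Integrable (fun z : ℂ => Real.exp (-‖z‖ ^ 2)) :=
    Integrable.of_integral_ne_zero (by rw [integral_gaussian_complex_plane]; exact Real.pi_ne_zero)
  rw [← integral_gaussian_complex_plane,
    ofReal_integral_eq_lintegral_ofReal hint (ae_of_all _ fun _ => (Real.exp_pos _).le)]

theorem norm_mul_exp_sq_mul_gaussian (c w z : ℂ) :
    ‖c * cexp (w * z)‖ ^ 2 * Real.exp (-‖z‖ ^ 2) =
      ‖c‖ ^ 2 * Real.exp (‖w‖ ^ 2) * Real.exp (-‖z - conj w‖ ^ 2) := by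
  rw [norm_mul, norm_exp, mul_pow, ← Real.exp_nat_mul, mul_assoc, mul_assoc, ← Real.exp_add,
    ← Real.exp_add]
  congr 2
  simp only [Complex.sq_norm, normSq_apply, mul_re, sub_re, sub_im, conj_re, conj_im]
  ring

theorem lintegral_norm_mul_exp_sq_mul_gaussian (c w : ℂ) :
    ∫⁻ z : ℂ, ENNReal.ofReal (‖c * cexp (w * z)‖ ^ 2 * Real.exp (-‖z‖ ^ 2)) =
      ENNReal.ofReal (‖c‖ ^ 2 * Real.exp (‖w‖ ^ 2) * Real.pi) := by
  simp_rw [norm_mul_exp_sq_mul_gaussian,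
    ENNReal.ofReal_mul (by positivity : 0 ≤ ‖c‖ ^ 2 * Real.exp (‖w‖ ^ 2))]
  rw [lintegral_const_mul' _ _ ENNReal.ofReal_ne_top,
    lintegral_sub_right_eq_self (fun z => ENNReal.ofReal (Real.exp (-‖z‖ ^ 2))),
    lintegral_gaussian_complex_plane]

theorem wco_normal_necessary_translation_general (B C D : ℂ) (hC : C ≠ 0)
    (ψ φ ψh φh : ℂ → ℂ)
    (hψ : ∀ z : ℂ, ψ z = C * Complex.exp (D * z))
    (hψh : ∀ z : ℂ, ψh z = conj C * Complex.exp (conj B * z))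
    (heq : ∀ f : ℂ → ℂ, Differentiable ℂ f →
      (∫⁻ z : ℂ, ENNReal.ofReal
          ((‖f z‖) ^ 2 * Real.exp (-(‖z‖) ^ 2)) < ⊤) →
      ∫⁻ z : ℂ, ENNReal.ofReal
          ((‖ψh z * f (φh z)‖) ^ 2 * Real.exp (-(‖z‖) ^ 2)) =
        ∫⁻ z : ℂ, ENNReal.ofReal
          ((‖ψ z * f (φ z)‖) ^ 2 * Real.exp (-(‖z‖) ^ 2))) :
    ‖D‖ = ‖B‖ := by
  have hone := heq (fun _ => 1) (differentiable_const 1) (by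
    simp [lintegral_gaussian_complex_plane])
  simp only [hψ, hψh, mul_one, lintegral_norm_mul_exp_sq_mul_gaussian, norm_conj] at hone
  rw [ENNReal.ofReal_eq_ofReal_iff (by positivity) (by positivity), mul_right_comm,
    mul_right_comm _ _ Real.pi] at hone
  have hCπ : ‖C‖ ^ 2 * Real.pi ≠ 0 :=
    mul_ne_zero (pow_ne_zero 2 (norm_ne_zero_iff.mpr hC)) Real.pi_ne_zero
  have hexp : Real.exp (‖B‖ ^ 2) = Real.exp (‖D‖ ^ 2) := mul_left_cancel₀ hCπ hone
  have hsq : ‖B‖ ^ 2 = ‖D‖ ^ 2 := Real.exp_injective hexp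
  exact ((sq_eq_sq₀ (norm_nonneg B) (norm_nonneg D)).mp hsq).symm

/-- necessity of `|D| = |B|` for normality in the translation case `A = 1`. -/
theorem wco_normal_necessary_translation (B C D : ℂ) (hC : C ≠ 0)
    (ψ φ ψh φh : ℂ → ℂ)
    (hψ : ∀ z : ℂ, ψ z = C * Complex.exp (D * z))
    (hφ : ∀ z : ℂ, φ z = z + B)
    (hψh : ∀ z : ℂ, ψh z = conj C * Complex.exp (conj B * z))
    (hφh : ∀ z : ℂ, φh z = z + conj D)
    (heq : ∀ f : ℂ → ℂ, Differentiable ℂ f →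
      (∫⁻ z : ℂ, ENNReal.ofReal
          ((‖f z‖) ^ 2 * Real.exp (-(‖z‖) ^ 2)) < ⊤) →
      ∫⁻ z : ℂ, ENNReal.ofReal
          ((‖ψh z * f (φh z)‖) ^ 2 * Real.exp (-(‖z‖) ^ 2)) =
        ∫⁻ z : ℂ, ENNReal.ofReal
          ((‖ψ z * f (φ z)‖) ^ 2 * Real.exp (-(‖z‖) ^ 2))) :
    ‖D‖ = ‖B‖ :=
  wco_normal_necessary_translation_general B C D hC ψ φ ψh φh hψ hψh heq
end
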